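/- Let S = {n ∈ ℕ : n ≥ 2} with the usual multiplication and the usual order of natural numbers (an ordered groupoid), and let f be the fuzzy subset of S defined by f(2) = 0 and f(n) = 1 for n > 2. Then: (i) for every fuzzy subset g of S with g∘g ⪯ f, we have g ⪯ f; and (ii) f is not fuzzy semiprime, since f(2) = 0 < 1 = f(2²) = f(4). Hence the condition '(g∘g ⪯ f implies g ⪯ f for all fuzzy subsets g)' does not imply fuzzy semiprimeness in general. -/

import Mathlib

/-! Every `n ≥ 2` satisfies `n ≤ n * n`, so any bounded fuzzy subset `g` of `S` satisfies
`g x = min (g x) (g x) ≤ (g ∘ g)(x)`; hence `g ∘ g ⪯ f` gives `g ⪯ f` whatever `f` is.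
Semiprimeness fails at `2`, because `f (2 * 2) = f 4 = 1 > 0 = f 2`. -/

/-- The composition `f ∘ g` of two fuzzy subsets (maps into `[0,1] ⊆ ℝ`) of an
ordered groupoid `S`: `(f ∘ g)(a) = sup { min (f x) (g y) | a ≤ x * y }`,
and `0` when no such pair exists (which agrees with `Real.sSup_empty`). -/
noncomputable def fuzzyComp {S : Type*} [Mul S] [PartialOrder S] (f g : S → ℝ) : S → ℝ :=
  fun a => sSup {t : ℝ | ∃ x y : S, a ≤ x * y ∧ t = min (f x) (g y)}

/-- Multiplication on `S = {n ∈ ℕ : n ≥ 2}` inherited from `ℕ`. -/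
instance : Mul {n : ℕ // 2 ≤ n} :=
  ⟨fun a b => ⟨a.1 * b.1, by have ha := a.2; have hb := b.2; nlinarith⟩⟩

/-- `S = {n ∈ ℕ : n ≥ 2}` with the usual multiplication and order is an
ordered groupoid: multiplication is compatible with the order (left). -/
instance : CovariantClass {n : ℕ // 2 ≤ n} {n : ℕ // 2 ≤ n} (· * ·) (· ≤ ·) :=
  ⟨fun a b c h => Subtype.coe_le_coe.mp (Nat.mul_le_mul_left a.1 h)⟩

/-- compatibility on the right. -/
instance : CovariantClass {n : ℕ // 2 ≤ n} {n : ℕ // 2 ≤ n}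
    (Function.swap (· * ·)) (· ≤ ·) :=
  ⟨fun a b c h => Subtype.coe_le_coe.mp (Nat.mul_le_mul_right a.1 h)⟩

/-- The fuzzy subset `f` of `S = {n ∈ ℕ : n ≥ 2}` with `f(2) = 0` and `f(n) = 1` for `n > 2`. -/
noncomputable def f3 : {n : ℕ // 2 ≤ n} → ℝ :=
  fun n => if n.1 = 2 then 0 else 1

theorem min_le_fuzzyComp {S : Type*} [Mul S] [PartialOrder S] {f g : S → ℝ}
    (hf : BddAbove (Set.range f)) {a x y : S} (h : a ≤ x * y) :
    min (f x) (g y) ≤ fuzzyComp f g a := by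
  obtain ⟨M, hM⟩ := hf
  refine le_csSup ⟨M, ?_⟩ ⟨x, y, h, rfl⟩
  rintro _ ⟨x', y', -, rfl⟩
  exact (min_le_left _ _).trans (hM ⟨x', rfl⟩)

theorem le_fuzzyComp_self {S : Type*} [Mul S] [PartialOrder S] (hS : ∀ x : S, x ≤ x * x)
    {g : S → ℝ} (hg : BddAbove (Set.range g)) (x : S) : g x ≤ fuzzyComp g g x := by
  simpa using min_le_fuzzyComp (g := g) hg (hS x)

theorem self_le_mul_self_of_two_le (x : {n : ℕ // 2 ≤ n}) : x ≤ x * x :=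
  Subtype.coe_le_coe.mp (Nat.le_mul_self x.1)

/-- Theorem 4, failure of (2) ⇒ (1): for `S = {n ∈ ℕ : n ≥ 2}` and the fuzzy
subset `f` with `f(2) = 0`, `f(n) = 1` for `n > 2`:
(i) every fuzzy subset `g` with `g ∘ g ⪯ f` satisfies `g ⪯ f`, yet
(ii) `f` is not fuzzy semiprime, since `f(2) = 0 < 1 = f(4)`. -/
theorem stmt3 :
    (∀ g : {n : ℕ // 2 ≤ n} → ℝ, (∀ x, g x ∈ Set.Icc (0 : ℝ) 1) →
      (∀ a, fuzzyComp g g a ≤ f3 a) → ∀ x, g x ≤ f3 x) ∧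
    (¬ ∀ x : {n : ℕ // 2 ≤ n}, f3 (x * x) ≤ f3 x) ∧
    f3 ⟨2, by norm_num⟩ = 0 ∧ f3 ⟨4, by norm_num⟩ = 1 := by
  refine ⟨fun g hg hgg x => ?_, fun hsemiprime => ?_, if_pos rfl, if_neg (by decide)⟩
  · have hbdd : BddAbove (Set.range g) := ⟨1, by rintro _ ⟨y, rfl⟩; exact (hg y).2⟩
    exact (le_fuzzyComp_self self_le_mul_self_of_two_le hbdd x).trans (hgg x)
  · have h := hsemiprime ⟨2, le_rfl⟩
    norm_num [f3, show (⟨2, le_rfl⟩ * ⟨2, le_rfl⟩ : {n : ℕ // 2 ≤ n}).1 = 4 from rfl] at h
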